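/- Let S ⊆ {1, 2, 3, …} be finite and nonempty with m = max S, let k₀ ∈ ℕ, and let z₀ = ∑_{j=k₀}^∞ t^j ∈ K (the Laurent series whose coefficient of t^j is 1 for j ≥ k₀ and 0 otherwise). Then {x ∈ K : ω_{S,z₀}(x,y) = ω_{S,z₀}(y,x) for all y ∈ K} = {x ∈ K : x_j = 0 for all j ≤ m − k₀}. That is, S_{ω_{S,z₀}} equals the compact open subgroup U_{m−k₀} = {x ∈ K : x = 0 or ν(x) > m − k₀}. -/

import Mathlib

noncomputable section

/-- `𝔽_p((t))`, the field of formal Laurent series over `𝔽_p = ℤ/pℤ`. -/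
abbrev Kp (p : ℕ) : Type := HahnSeries ℤ (ZMod p)

lemma isPWO_Ici (a : ℤ) : (Set.Ici a).IsPWO := by
  have h2 : ((fun k : ℕ => a + (k : ℤ)) '' Set.univ).IsPWO :=
    ((Set.isWF_univ_iff.mpr (inferInstance : WellFoundedLT ℕ)).isPWO).image_of_monotone
      (fun i j hij => by omega)
  have heq : Set.Ici a = (fun k : ℕ => a + (k : ℤ)) '' Set.univ := by
    ext m
    simp only [Set.image_univ, Set.mem_range, Set.mem_Ici]
    constructor
    · intro hm; exact ⟨(m - a).toNat, by omega⟩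
    · rintro ⟨k, rfl⟩; omega
  rw [heq]; exact h2

/-- `η_S(x,y)`: the Laurent series whose coefficient of `t^m` is
`∑_{n ∈ S} x_{m-n} · y_{m+n}` (a finite sum for each `m`). -/
def etaS (p : ℕ) (S : Set ℕ) (x y : Kp p) : Kp p :=
  ⟨fun m => ∑ᶠ n ∈ S, x.coeff (m - (n : ℤ)) * y.coeff (m + (n : ℤ)), by
    refine (isPWO_Ici x.order).mono ?_
    intro m hm
    simp only [Function.mem_support] at hm
    rw [Set.mem_Ici]
    by_contra hlt
    push_neg at hlt
    apply hm
    apply finsum_mem_of_eqOn_zero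
    intro n _
    have hc : x.coeff (m - (n : ℤ)) = 0 :=
      HahnSeries.coeff_eq_zero_of_lt_order (by omega)
    show x.coeff (m - (n : ℤ)) * y.coeff (m + (n : ℤ)) = (0 : ℕ → ZMod p) n
    rw [hc, zero_mul, Pi.zero_apply]⟩

/-- The subgroup of series all of whose coefficients below `k` vanish. -/
def hahnU (R : Type*) [AddCommGroup R] (k : ℤ) : AddSubgroup (HahnSeries ℤ R) where
  carrier := {x | ∀ j : ℤ, j < k → x.coeff j = 0}
  zero_mem' := by intro j _; exact HahnSeries.coeff_zero
  add_mem' := by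
    intro a b ha hb j hj
    rw [HahnSeries.coeff_add, ha j hj, hb j hj, add_zero]
  neg_mem' := by
    intro a ha j hj
    rw [HahnSeries.coeff_neg, ha j hj, neg_zero]

/-- The `t`-adic (valuation) topology: the group topology in which the subgroups `hahnU R k`,
`k ∈ ℤ`, form a neighbourhood basis of `0`. -/
instance hahnTopology (R : Type*) [AddCommGroup R] : TopologicalSpace (HahnSeries ℤ R) :=
  ⨅ k : ℤ, TopologicalSpace.induced
    (fun x : HahnSeries ℤ R => (QuotientAddGroup.mk x : HahnSeries ℤ R ⧸ hahnU R k)) ⊥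

/-- The injective character `e : 𝔽_p → 𝕋 = ℝ/ℤ`, `a ↦ exp(2πi·ã/p)`, written additively. -/
def echarM (M : ℕ) (a : ZMod M) : AddCircle (1 : ℝ) :=
  (((a.val : ℝ) / (M : ℝ) : ℝ) : AddCircle (1 : ℝ))

/-- The multiplier `ω_{S,z} : K × K → 𝕋`, `ω_{S,z}(x,y) = χ_z(η_S(x,y)) = e((η_S(x,y)·z)₀)`,
where `(·)₀` is the coefficient of `t⁰`. -/
def omegaSZ (p : ℕ) (S : Set ℕ) (z x y : Kp p) : AddCircle (1 : ℝ) :=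
  echarM p ((etaS p S x y * z).coeff 0)

/-- `z₀ = ∑_{j=k₀}^∞ t^j`: the Laurent series whose coefficient of `t^j` is `1` for `j ≥ k₀`
and `0` otherwise. -/
def zser (p : ℕ) (k₀ : ℕ) : Kp p :=
  ⟨fun j => if (k₀ : ℤ) ≤ j then 1 else 0, by
    refine (isPWO_Ici (k₀ : ℤ)).mono ?_
    intro j hj
    simp only [Function.mem_support] at hj
    rw [Set.mem_Ici]
    by_contra h
    exact hj (if_neg (by omega))⟩

/-! ### Auxiliary lemmas -/

lemma echarM_injective (p : ℕ) (hp : p.Prime) : Function.Injective (echarM p) := by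
  haveI : NeZero p := ⟨hp.ne_zero⟩
  intro a b h
  have hp0 : (0 : ℝ) < p := by exact_mod_cast hp.pos
  have ha : ((a.val : ℝ) / p) ∈ Set.Ico (0 : ℝ) (0 + 1) := by
    constructor
    · positivity
    · rw [zero_add, div_lt_one hp0]; exact_mod_cast a.val_lt
  have hb : ((b.val : ℝ) / p) ∈ Set.Ico (0 : ℝ) (0 + 1) := by
    constructor
    · positivity
    · rw [zero_add, div_lt_one hp0]; exact_mod_cast b.val_lt
  have h' := (AddCircle.coe_eq_coe_iff_of_mem_Ico (p := (1 : ℝ)) ha hb).mp h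
  have hv : a.val = b.val := by
    rw [div_left_inj' hp0.ne'] at h'
    exact_mod_cast h'
  exact ZMod.val_injective p hv

lemma etaS_coeff (p : ℕ) (S : Set ℕ) (hfin : S.Finite) (x y : Kp p) (m' : ℤ) :
    (etaS p S x y).coeff m'
      = ∑ n ∈ hfin.toFinset, x.coeff (m' - (n : ℤ)) * y.coeff (m' + (n : ℤ)) := by
  show (∑ᶠ n ∈ S, x.coeff (m' - (n : ℤ)) * y.coeff (m' + (n : ℤ))) = _
  rw [← finsum_mem_coe_finset, hfin.coe_toFinset]

lemma zser_coeff (p : ℕ) (k₀ : ℕ) (j : ℤ) :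
    (zser p k₀).coeff j = if (k₀ : ℤ) ≤ j then 1 else 0 := rfl

lemma mul_zser_coeff_zero (p : ℕ) (k₀ : ℕ) (w : Kp p)
    (hw : ∀ i : ℤ, i ≤ -(k₀ : ℤ) → w.coeff i = 0) :
    (w * zser p k₀).coeff 0 = 0 := by
  rw [HahnSeries.coeff_mul]
  refine Finset.sum_eq_zero ?_
  intro ij hij
  rw [Finset.mem_addAntidiagonal] at hij
  obtain ⟨h1, h2, h3⟩ := hij
  have h2' : (k₀ : ℤ) ≤ ij.2 := by
    by_contra hlt
    exact ((zser p k₀).mem_support ij.2).mp h2 (by rw [zser_coeff, if_neg hlt])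
  rw [hw ij.1 (by omega), zero_mul]

/-- Let `S ⊆ {1,2,3,…}` be finite and nonempty with `m = max S`, let
`k₀ ∈ ℕ`, and let `z₀ = ∑_{j=k₀}^∞ t^j ∈ K`.  Then
`{x ∈ K : ω_{S,z₀}(x,y) = ω_{S,z₀}(y,x) for all y ∈ K} = {x : x_j = 0 for all j ≤ m − k₀}`,
i.e. `S_{ω_{S,z₀}}` equals the compact open subgroup
`U_{m−k₀} = {x : x = 0 or ν(x) > m − k₀}`. -/
theorem statement10 (p : ℕ) (hp : p.Prime) (S : Set ℕ) (hS : ∀ n ∈ S, 1 ≤ n)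
    (hfin : S.Finite) (m : ℕ) (hmem : m ∈ S) (hmax : ∀ n ∈ S, n ≤ m) (k₀ : ℕ) :
    {x : Kp p | ∀ y : Kp p, omegaSZ p S (zser p k₀) x y = omegaSZ p S (zser p k₀) y x}
        = {x : Kp p | ∀ j : ℤ, j ≤ (m : ℤ) - (k₀ : ℤ) → x.coeff j = 0} ∧
    {x : Kp p | ∀ j : ℤ, j ≤ (m : ℤ) - (k₀ : ℤ) → x.coeff j = 0}
        = ((hahnU (ZMod p) ((m : ℤ) - (k₀ : ℤ) + 1) : AddSubgroup (Kp p)) : Set (Kp p)) ∧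
    IsOpen ((hahnU (ZMod p) ((m : ℤ) - (k₀ : ℤ) + 1) : AddSubgroup (Kp p)) : Set (Kp p)) ∧
    IsCompact ((hahnU (ZMod p) ((m : ℤ) - (k₀ : ℤ) + 1) : AddSubgroup (Kp p)) : Set (Kp p)) := by
  haveI : NeZero p := ⟨hp.ne_zero⟩
  have hm1 : 1 ≤ m := hS m hmem
  refine ⟨?_, ?_, ?_, ?_⟩
  · -- Part 1
    ext x
    simp only [Set.mem_setOf_eq]
    constructor
    · intro h j hj
      by_contra hx0
      have hxne : x ≠ 0 := by
        intro h0
        exact hx0 (by rw [h0]; rfl)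
      set j₀ : ℤ := x.order with hj₀
      have hc0 : x.coeff j₀ ≠ 0 := mt HahnSeries.coeff_order_eq_zero.mp hxne
      have hj₀le : j₀ ≤ j := HahnSeries.order_le_of_coeff_ne_zero hx0
      have hlow : ∀ i : ℤ, i < j₀ → x.coeff i = 0 := fun i hi =>
        HahnSeries.coeff_eq_zero_of_lt_order hi
      set y : Kp p := HahnSeries.single (j₀ - 2 * (m : ℤ)) 1 with hy
      have heta1 : etaS p S x y = 0 := by
        ext m'
        rw [etaS_coeff p S hfin, HahnSeries.coeff_zero]
        refine Finset.sum_eq_zero ?_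
        intro n hn
        have hn1 : 1 ≤ n := hS n (hfin.mem_toFinset.mp hn)
        by_cases hcase : m' + (n : ℤ) = j₀ - 2 * (m : ℤ)
        · rw [hlow (m' - (n : ℤ)) (by omega), zero_mul]
        · rw [hy, HahnSeries.coeff_single, if_neg hcase, mul_zero]
      have heta2 : etaS p S y x = HahnSeries.single (j₀ - (m : ℤ)) (x.coeff j₀) := by
        ext m'
        rw [etaS_coeff p S hfin, HahnSeries.coeff_single]
        by_cases hm' : m' = j₀ - (m : ℤ)
        · rw [if_pos hm']
          rw [Finset.sum_eq_single m]
          · rw [hm', show j₀ - (m : ℤ) - m = j₀ - 2 * (m : ℤ) by ring,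
              show j₀ - (m : ℤ) + m = j₀ by ring, hy, HahnSeries.coeff_single_same, one_mul]
          · intro n hn hne
            have hnm : (n : ℤ) ≠ (m : ℤ) := by exact_mod_cast hne
            rw [hy, HahnSeries.coeff_single, if_neg (by omega), zero_mul]
          · intro hnotmem
            exact absurd (hfin.mem_toFinset.mpr hmem) hnotmem
        · rw [if_neg hm']
          refine Finset.sum_eq_zero ?_
          intro n hn
          have hnm : n ≤ m := hmax n (hfin.mem_toFinset.mp hn)
          by_cases h1 : m' - (n : ℤ) = j₀ - 2 * (m : ℤ)
          · have hnm' : (n : ℤ) < (m : ℤ) := by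
              rcases lt_or_eq_of_le (show (n : ℤ) ≤ m by exact_mod_cast hnm) with h' | h'
              · exact h'
              · exact absurd (by omega : m' = j₀ - (m : ℤ)) hm'
            rw [hlow (m' + (n : ℤ)) (by omega), mul_zero]
          · rw [hy, HahnSeries.coeff_single, if_neg h1, zero_mul]
      have hzc : (zser p k₀).coeff ((m : ℤ) - j₀) = 1 := by
        rw [zser_coeff, if_pos (by omega)]
      have hωyx : omegaSZ p S (zser p k₀) y x = echarM p (x.coeff j₀) := by
        unfold omegaSZ
        rw [heta2]
        have hcalc : ((HahnSeries.single (j₀ - (m : ℤ)) (x.coeff j₀) : Kp p)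
            * zser p k₀).coeff (((m : ℤ) - j₀) + (j₀ - (m : ℤ)))
            = x.coeff j₀ * (zser p k₀).coeff ((m : ℤ) - j₀) :=
          HahnSeries.coeff_single_mul_add
        rw [show ((m : ℤ) - j₀) + (j₀ - (m : ℤ)) = 0 by ring] at hcalc
        rw [hcalc, hzc, mul_one]
      have hωxy : omegaSZ p S (zser p k₀) x y = echarM p 0 := by
        unfold omegaSZ
        rw [heta1, zero_mul, HahnSeries.coeff_zero]
      have := h y
      rw [hωxy, hωyx] at this
      exact hc0 (echarM_injective p hp this).symm
    · intro h y
      unfold omegaSZ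
      rw [mul_zser_coeff_zero p k₀ _ ?_, mul_zser_coeff_zero p k₀ _ ?_]
      · intro i hi
        rw [etaS_coeff p S hfin]
        refine Finset.sum_eq_zero ?_
        intro n hn
        have hnm : n ≤ m := hmax n (hfin.mem_toFinset.mp hn)
        rw [h (i + (n : ℤ)) (by omega), mul_zero]
      · intro i hi
        rw [etaS_coeff p S hfin]
        refine Finset.sum_eq_zero ?_
        intro n hn
        have hn1 : 1 ≤ n := hS n (hfin.mem_toFinset.mp hn)
        rw [h (i - (n : ℤ)) (by omega), zero_mul]
  · -- Part 2
    ext x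
    simp only [Set.mem_setOf_eq, SetLike.mem_coe]
    constructor
    · intro h j hj
      exact h j (by omega)
    · intro h j hj
      exact h j (by omega)
  · -- Part 3: openness
    set K : ℤ := (m : ℤ) - (k₀ : ℤ) + 1 with hK
    have hU : ((hahnU (ZMod p) K : AddSubgroup (Kp p)) : Set (Kp p)) =
        (fun x : Kp p => (QuotientAddGroup.mk x : Kp p ⧸ hahnU (ZMod p) K)) ⁻¹' {0} := by
      ext w
      simp only [Set.mem_preimage, Set.mem_singleton_iff, SetLike.mem_coe]
      rw [show (0 : Kp p ⧸ hahnU (ZMod p) K) = QuotientAddGroup.mk 0 from rfl,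
        QuotientAddGroup.eq]
      constructor
      · intro hw
        exact (hahnU (ZMod p) K).add_mem ((hahnU (ZMod p) K).neg_mem hw)
          (hahnU (ZMod p) K).zero_mem
      · intro hw
        have := (hahnU (ZMod p) K).neg_mem hw
        rw [neg_add_rev, neg_zero, neg_neg, zero_add] at this
        exact this
    rw [hU]
    have hopen : @IsOpen (Kp p) (TopologicalSpace.induced
        (fun x : Kp p => (QuotientAddGroup.mk x : Kp p ⧸ hahnU (ZMod p) K)) ⊥)
        ((fun x : Kp p => (QuotientAddGroup.mk x : Kp p ⧸ hahnU (ZMod p) K)) ⁻¹' {0}) :=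
      @isOpen_induced _ _ ⊥ _ _ (@isOpen_discrete _ ⊥ (@DiscreteTopology.mk _ ⊥ rfl) _)
    exact IsOpen.mono hopen (iInf_le (fun k : ℤ => TopologicalSpace.induced
      (fun x : Kp p => (QuotientAddGroup.mk x : Kp p ⧸ hahnU (ZMod p) k)) ⊥) K)
  · -- Part 4: compactness
    set K : ℤ := (m : ℤ) - (k₀ : ℤ) + 1 with hK
    rw [isCompact_iff_ultrafilter_le_nhds]
    intro F hF
    rw [Filter.le_principal_iff] at hF
    have hchoice : ∀ j : ℤ, ∃ c : ZMod p, {w : Kp p | w.coeff j = c} ∈ F := by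
      intro j
      obtain ⟨c, hc⟩ := Ultrafilter.eq_pure_of_finite
        (Ultrafilter.map (fun w : Kp p => w.coeff j) F)
      refine ⟨c, ?_⟩
      have h1 : {c} ∈ Ultrafilter.map (fun w : Kp p => w.coeff j) F := by
        rw [hc]; exact Ultrafilter.mem_pure.mpr rfl
      exact Ultrafilter.mem_map.mp h1
    choose c hc using hchoice
    set x : Kp p := ⟨fun j => if K ≤ j then c j else 0, by
      refine (isPWO_Ici K).mono ?_
      intro j hj
      simp only [Function.mem_support] at hj
      rw [Set.mem_Ici]
      by_contra hcon
      exact hj (if_neg (by omega))⟩ with hx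
    have hxcoeff : ∀ j : ℤ, x.coeff j = if K ≤ j then c j else 0 := fun j => rfl
    refine ⟨x, ?_, ?_⟩
    · show ∀ j : ℤ, j < K → x.coeff j = 0
      intro j hj
      rw [hxcoeff, if_neg (by omega)]
    · show ↑F ≤ @nhds _ (⨅ k : ℤ, TopologicalSpace.induced
        (fun w : Kp p => (QuotientAddGroup.mk w : Kp p ⧸ hahnU (ZMod p) k)) ⊥) x
      rw [nhds_iInf]
      refine le_iInf ?_
      intro k'
      rw [@nhds_induced _ _ ⊥ _ _, @nhds_discrete _ ⊥ (@DiscreteTopology.mk _ ⊥ rfl), Filter.comap_pure,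
        Filter.le_principal_iff]
      have hsub : ((hahnU (ZMod p) K : AddSubgroup (Kp p)) : Set (Kp p))
          ∩ ⋂ j ∈ Finset.Ico K k', {w : Kp p | w.coeff j = c j}
          ⊆ (fun w : Kp p => (QuotientAddGroup.mk w : Kp p ⧸ hahnU (ZMod p) k')) ⁻¹'
            {(QuotientAddGroup.mk x : Kp p ⧸ hahnU (ZMod p) k')} := by
        rintro w ⟨hw1, hw2⟩
        simp only [Set.mem_preimage, Set.mem_singleton_iff]
        rw [QuotientAddGroup.eq]
        show ∀ j : ℤ, j < k' → (-w + x).coeff j = 0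
        intro j hj
        rw [HahnSeries.coeff_add, HahnSeries.coeff_neg]
        have hw1' : ∀ i : ℤ, i < K → w.coeff i = 0 := hw1
        rcases lt_or_ge j K with h' | h'
        · rw [hw1' j h', hxcoeff, if_neg (by omega), neg_zero, add_zero]
        · have hjmem : j ∈ Finset.Ico K k' := Finset.mem_Ico.mpr ⟨h', hj⟩
          have hw2' : w.coeff j = c j := by
            have := Set.mem_iInter₂.mp hw2 j hjmem
            exact this
          rw [hw2', hxcoeff, if_pos h', neg_add_cancel]
      refine Filter.mem_of_superset ?_ hsub
      refine Filter.inter_mem hF ?_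
      refine (Filter.biInter_finset_mem (Finset.Ico K k')).mpr ?_
      intro j hj
      exact hc j
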